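/- Let P be a formula-based program, α a countable ordinal, and I an interpretation. If I ⊑_α T_P(I), then T^{ω₁}_{P,α}(I) ⊑_{α+1} T_P(T^{ω₁}_{P,α}(I)). -/

import Mathlib

/-!
Infinite-valued semantics for formula-based logic programs
(Rondogiannis–Wadge style), following Lüdecke,
"Every Formula-Based Logic Program Has a Least Infinite-Valued Model".
-/

noncomputable section

namespace ILP

attribute [local instance] Classical.propDecidable

/-- The first uncountable ordinal. -/
def omega1 : Ordinal.{0} := Ordinal.omega 1

lemma omega1_isLimit : Order.IsSuccLimit omega1 := by
  first | exact Ordinal.isSuccLimit_omega 1 | exact Cardinal.isSuccLimit_omega 1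

lemma zero_lt_omega1 : (0 : Ordinal) < omega1 := omega1_isLimit.pos

lemma succ_lt_omega1 {a : Ordinal} (h : a < omega1) : a + 1 < omega1 := by
  rw [Ordinal.add_one_eq_succ]
  exact omega1_isLimit.succ_lt h

/-- Pre-truth-values: `F α`, `0`, `T α` for arbitrary ordinals `α`. -/
inductive TVPre : Type 1 where
  | F : Ordinal → TVPre
  | zero : TVPre
  | T : Ordinal → TVPre

/-- A pre-truth-value is countable if its index is a countable ordinal. -/
def TVPre.countable : TVPre → Prop
  | .F a => a < omega1
  | .zero => True
  | .T a => a < omega1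

/-- The set `W` of truth values:
`F_α` (false values) for countable `α`, `0`, and `T_α` (true values) for countable `α`. -/
def W : Type 1 := {v : TVPre // v.countable}

/-- The strict order on truth values:
`F_0 < F_1 < ... < 0 < ... < T_1 < T_0`. -/
def TVPre.lt : TVPre → TVPre → Prop
  | .F a, .F b => a < b
  | .F _, .zero => True
  | .F _, .T _ => True
  | .zero, .T _ => True
  | .T a, .T b => b < a
  | _, _ => False

instance : LT W := ⟨fun x y => TVPre.lt x.1 y.1⟩

instance : LE W := ⟨fun x y => x = y ∨ x < y⟩

lemma TVPre.lt_trans {a b c : TVPre} (hab : a.lt b) (hbc : b.lt c) : a.lt c := by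
  cases a <;> cases b <;> cases c <;> simp_all [TVPre.lt] <;>
    first | exact hab.trans hbc | exact hbc.trans hab

lemma TVPre.lt_irrefl {a : TVPre} (h : a.lt a) : False := by
  cases a <;> simp_all [TVPre.lt]

instance instLinearOrderW : LinearOrder W where
  le_refl a := Or.inl rfl
  le_trans a b c hab hbc := by
    rcases hab with rfl | hab
    · exact hbc
    rcases hbc with rfl | hbc
    · exact Or.inr hab
    · exact Or.inr (TVPre.lt_trans hab hbc)
  le_antisymm a b hab hba := by
    rcases hab with rfl | hab
    · rfl
    rcases hba with rfl | hba
    · rfl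
    exact absurd (TVPre.lt_trans hab hba) TVPre.lt_irrefl
  le_total a b := by
    obtain ⟨a1, ha⟩ := a
    obtain ⟨b1, hb⟩ := b
    have tri : a1 = b1 ∨ a1.lt b1 ∨ b1.lt a1 := by
      cases a1 <;> cases b1 <;> simp [TVPre.lt] <;> (try rename_i x y) <;>
        (try rcases lt_trichotomy x y with h | h | h) <;> tauto
    rcases tri with h | h | h
    · exact Or.inl (Or.inl (Subtype.ext h))
    · exact Or.inl (Or.inr h)
    · exact Or.inr (Or.inr h)
  lt_iff_le_not_ge a b := by
    constructor
    · intro h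
      refine ⟨Or.inr h, ?_⟩
      rintro (rfl | h')
      · exact TVPre.lt_irrefl h
      · exact TVPre.lt_irrefl (TVPre.lt_trans h h')
    · rintro ⟨rfl | h, h2⟩
      · exact absurd (Or.inl rfl) h2
      · exact h
  toDecidableLE := Classical.decRel _

/-- The false value `F_α`. -/
def WF (a : Ordinal) (h : a < omega1) : W := ⟨.F a, h⟩

/-- The true value `T_α`. -/
def WT (a : Ordinal) (h : a < omega1) : W := ⟨.T a, h⟩

/-- The undefined value `0`. -/
def WZ : W := ⟨.zero, trivial⟩

/-- `deg w < α` : the degree of `w` (which is `∞` for `0`) is less than `α`. -/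
def degLT (w : W) (α : Ordinal) : Prop :=
  match w.1 with
  | .F a => a < α
  | .zero => False
  | .T a => a < α

/-- The set of indices of true values occurring in `M`. -/
def TIdx (M : Set W) : Set Ordinal := {a | ∃ w ∈ M, w.1 = TVPre.T a}

/-- The set of indices of false values occurring in `M`. -/
def FIdx (M : Set W) : Set Ordinal := {a | ∃ w ∈ M, w.1 = TVPre.F a}

lemma mem_lt_omega1_of_TIdx {M : Set W} {a : Ordinal} (h : a ∈ TIdx M) : a < omega1 := by
  obtain ⟨w, _, hw⟩ := h
  have := w.2
  rw [hw] at this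
  exact this

lemma mem_lt_omega1_of_FIdx {M : Set W} {a : Ordinal} (h : a ∈ FIdx M) : a < omega1 := by
  obtain ⟨w, _, hw⟩ := h
  have := w.2
  rw [hw] at this
  exact this

/-- The least upper bound of a subset of `W`. -/
def Wsup (M : Set W) : W :=
  if h : (TIdx M).Nonempty then
    WT (sInf (TIdx M))
      (lt_of_le_of_lt (csInf_le' h.choose_spec) (mem_lt_omega1_of_TIdx h.choose_spec))
  else if WZ ∈ M then WZ
  else if h2 : sSup (FIdx M) < omega1 then WF (sSup (FIdx M)) h2
  else WZ

/-- The greatest lower bound of a subset of `W`. -/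
def Winf (M : Set W) : W :=
  if h : (FIdx M).Nonempty then
    WF (sInf (FIdx M))
      (lt_of_le_of_lt (csInf_le' h.choose_spec) (mem_lt_omega1_of_FIdx h.choose_spec))
  else if WZ ∈ M then WZ
  else if h2 : sSup (TIdx M) < omega1 then WT (sSup (TIdx M)) h2
  else WZ

/-- The semantics of negation on `W`. -/
def Wneg : W → W
  | ⟨.F a, h⟩ => WT (a + 1) (succ_lt_omega1 h)
  | ⟨.zero, _⟩ => WZ
  | ⟨.T a, h⟩ => WF (a + 1) (succ_lt_omega1 h)

/-! ### Syntax -/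

/-- A first-order language with finitely many predicate symbols (at least one),
finitely many function symbols and finitely many constants (at least one). -/
structure Language where
  nPred : ℕ
  predAr : Fin nPred → ℕ
  nFun : ℕ
  funAr : Fin nFun → ℕ
  nConst : ℕ
  npos : 1 ≤ nPred
  cpos : 1 ≤ nConst

variable {L : Language}

/-- Terms of the language; variables are indexed by natural numbers. -/
inductive Term (L : Language) : Type where
  | var : ℕ → Term L
  | const : Fin L.nConst → Term L
  | func : (f : Fin L.nFun) → (Fin (L.funAr f) → Term L) → Term L

/-- A term is ground if it contains no variables. -/
def Term.ground : Term L → Prop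
  | .var _ => False
  | .const _ => True
  | .func _ ts => ∀ i, (ts i).ground

/-- The Herbrand universe: the set of ground terms. -/
def HU (L : Language) : Type := {t : Term L // t.ground}

/-- Formulas of the language. -/
inductive Formula (L : Language) : Type where
  | verum : Formula L
  | falsum : Formula L
  | atom : (p : Fin L.nPred) → (Fin (L.predAr p) → Term L) → Formula L
  | neg : Formula L → Formula L
  | conj : Formula L → Formula L → Formula L
  | disj : Formula L → Formula L → Formula L
  | all : ℕ → Formula L → Formula L
  | ex : ℕ → Formula L → Formula L

/-- A ground atom: a predicate symbol applied to ground terms.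
The Herbrand base `H_B` is the type of ground atoms. -/
structure GroundAtom (L : Language) : Type where
  pred : Fin L.nPred
  args : Fin (L.predAr pred) → HU L

/-- An (infinite-valued Herbrand) interpretation. -/
def Interp (L : Language) : Type 1 := GroundAtom L → W

/-- Evaluation of a term under a variable assignment. -/
def Term.evalT (h : ℕ → HU L) : Term L → HU L
  | .var n => h n
  | .const c => ⟨.const c, trivial⟩
  | .func f ts => ⟨.func f fun i => ((ts i).evalT h).1, fun i => ((ts i).evalT h).2⟩

/-- The infinite-valued semantics of formulas, relative to an interpretation and
a variable assignment. -/
def Formula.eval (I : Interp L) : Formula L → (ℕ → HU L) → W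
  | .verum, _ => WT 0 zero_lt_omega1
  | .falsum, _ => WF 0 zero_lt_omega1
  | .atom p ts, h => I ⟨p, fun i => (ts i).evalT h⟩
  | .neg φ, h => Wneg (φ.eval I h)
  | .conj φ ψ, h => min (φ.eval I h) (ψ.eval I h)
  | .disj φ ψ, h => max (φ.eval I h) (ψ.eval I h)
  | .ex v φ, h => Wsup (Set.range fun u : HU L => φ.eval I (Function.update h v u))
  | .all v φ, h => Winf (Set.range fun u : HU L => φ.eval I (Function.update h v u))

/-- The variables occurring in a term. -/
def Term.vars : Term L → Set ℕ
  | .var n => {n}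
  | .const _ => ∅
  | .func _ ts => ⋃ i, (ts i).vars

/-- The free variables of a formula. -/
def Formula.freeVars : Formula L → Set ℕ
  | .verum => ∅
  | .falsum => ∅
  | .atom _ ts => ⋃ i, (ts i).vars
  | .neg φ => φ.freeVars
  | .conj φ ψ => φ.freeVars ∪ ψ.freeVars
  | .disj φ ψ => φ.freeVars ∪ ψ.freeVars
  | .all v φ => φ.freeVars \ {v}
  | .ex v φ => φ.freeVars \ {v}

/-- Applying a substitution to a term. -/
def Term.subst (σ : ℕ → Term L) : Term L → Term L
  | .var n => σ n
  | .const c => .const c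
  | .func f ts => .func f fun i => (ts i).subst σ

/-- Applying a substitution to a formula (bound variables are not substituted). -/
def Formula.subst (σ : ℕ → Term L) : Formula L → Formula L
  | .verum => .verum
  | .falsum => .falsum
  | .atom p ts => .atom p fun i => (ts i).subst σ
  | .neg φ => .neg (φ.subst σ)
  | .conj φ ψ => .conj (φ.subst σ) (ψ.subst σ)
  | .disj φ ψ => .disj (φ.subst σ) (ψ.subst σ)
  | .all v φ => .all v (φ.subst (Function.update σ v (Term.var v)))
  | .ex v φ => .ex v (φ.subst (Function.update σ v (Term.var v)))

/-- A formula-based rule `A ← φ`: the head is an atom `P(t₁,…,tₛ)`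
(hence distinct from `⊤` and `⊥`) and the body is an arbitrary formula. -/
structure Rule (L : Language) : Type where
  headPred : Fin L.nPred
  headArgs : Fin (L.predAr headPred) → Term L
  body : Formula L

/-- The head of a rule, as an atomic formula. -/
def Rule.headAtom (r : Rule L) : Formula L := .atom r.headPred r.headArgs

/-- A formula-based logic program: a finite set of formula-based rules. -/
structure Program (L : Language) : Type where
  rules : Set (Rule L)
  finite : rules.Finite

/-- The set `P_G` of ground instances of a program `P`: pairs `(Aσ, φσ)` obtained
from a rule `A ← φ` of `P` and a substitution `σ` such that `Aσ` is a ground atom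
and `φσ` has no free variables. -/
def groundInstances (P : Program L) : Set (GroundAtom L × Formula L) :=
  {Aφ | ∃ r ∈ P.rules, ∃ σ : ℕ → Term L,
    (∃ hg : ∀ i, ((r.headArgs i).subst σ).ground,
      Aφ.1 = ⟨r.headPred, fun i => ⟨(r.headArgs i).subst σ, hg i⟩⟩) ∧
    Aφ.2 = r.body.subst σ ∧ (r.body.subst σ).freeVars = ∅}

/-- A default variable assignment (possible since there is at least one constant). -/
def defaultAssignment (L : Language) : ℕ → HU L :=
  fun _ => ⟨.const ⟨0, L.cpos⟩, trivial⟩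

/-- The value of a closed formula (independent of the variable assignment). -/
def Formula.evalClosed (I : Interp L) (φ : Formula L) : W :=
  φ.eval I (defaultAssignment L)

/-- The immediate consequence operator `T_P`. -/
def TP (P : Program L) (I : Interp L) : Interp L :=
  fun A => Wsup {w | ∃ φ : Formula L, (A, φ) ∈ groundInstances P ∧ w = φ.evalClosed I}

/-- `I ∥ F_β` : the set of ground atoms receiving value `F_β` under `I`. -/
def Ifalse (I : Interp L) (β : Ordinal) : Set (GroundAtom L) := {A | (I A).1 = TVPre.F β}

/-- `I ∥ T_β` : the set of ground atoms receiving value `T_β` under `I`. -/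
def Itrue (I : Interp L) (β : Ordinal) : Set (GroundAtom L) := {A | (I A).1 = TVPre.T β}

/-- `I =_α J`. -/
def eqa (α : Ordinal) (I J : Interp L) : Prop :=
  ∀ β ≤ α, Ifalse I β = Ifalse J β ∧ Itrue I β = Itrue J β

/-- `I ⊑_α J`. -/
def sqa (α : Ordinal) (I J : Interp L) : Prop :=
  (∀ β < α, eqa β I J) ∧ Ifalse J α ⊆ Ifalse I α ∧ Itrue I α ⊆ Itrue J α

/-- `I ⊏_α J`. -/
def sqlt (α : Ordinal) (I J : Interp L) : Prop := sqa α I J ∧ ¬ eqa α I J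

/-- `I ⊑_∞ J`. -/
def sqinf (I J : Interp L) : Prop := I = J ∨ ∃ α < omega1, sqlt α I J

/-- `I` satisfies the rule `A ← φ`. -/
def satisfies (I : Interp L) (r : Rule L) : Prop :=
  ∀ h : ℕ → HU L, r.body.eval I h ≤ r.headAtom.eval I h

/-- `I` is a model of `P`. -/
def isModel (I : Interp L) (P : Program L) : Prop := ∀ r ∈ P.rules, satisfies I r

/-- The transfinite iterates `T^β_{P,α}(I)`. -/
def iter (P : Program L) (α : Ordinal) (hα : α < omega1) (I : Interp L)
    (β : Ordinal) : Interp L :=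
  Ordinal.limitRecOn β I (fun _ J => TP P J)
    (fun β _ ih A =>
      if degLT (I A) α then I A
      else if ∃ γ, ∃ hγ : γ < β, (ih γ hγ A).1 = TVPre.T α then WT α hα
      else if ∀ γ, ∀ hγ : γ < β, (ih γ hγ A).1 = TVPre.F α then WF α hα
      else WF (α + 1) (succ_lt_omega1 hα))

/-- The union `⊔_{γ<α} I_γ` of a family of interpretations. -/
def unionInterp (α : Ordinal) (hα : α < omega1) (Ig : ∀ γ, γ < α → Interp L) :
    Interp L := fun A =>
  if h : ∃ ζ, ∃ hζ : ζ < α, ((Ig ζ hζ) A).1 = TVPre.F ζ ∨ ((Ig ζ hζ) A).1 = TVPre.T ζ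
  then Ig h.choose h.choose_spec.choose A
  else WF α hα

/-- The approximants `M_α` of a program `P`. -/
def approx (P : Program L) (α : Ordinal) : Interp L :=
  if hα : α < omega1 then
    if (∀ γ, ∀ _ : γ < α, ∀ ζ, ζ < γ → eqa ζ (approx P ζ) (approx P γ)) ∧
        sqa α (unionInterp α hα fun γ _ => approx P γ)
          (TP P (unionInterp α hα fun γ _ => approx P γ))
    then iter P α hα (unionInterp α hα fun γ _ => approx P γ) omega1
    else fun _ => WF 0 zero_lt_omega1
  else fun _ => WF 0 zero_lt_omega1
termination_by α
decreasing_by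
  all_goals first | assumption | exact lt_trans ‹_› ‹_›

/-- The depth `δ_P` of a program `P`. -/
def depth (P : Program L) : Ordinal :=
  sInf {δ | δ < omega1 ∧ ∀ γ, δ ≤ γ → γ < omega1 →
    Ifalse (approx P γ) γ = ∅ ∧ Itrue (approx P γ) γ = ∅}

/-- The least infinite-valued model `M_P` of a program `P`. -/
def MP (P : Program L) : Interp L := fun A =>
  if degLT (approx P (depth P) A) (depth P) then approx P (depth P) A else WZ

/-! ### Three-valued semantics -/

/-- The three truth values `F < 0 < T`. -/
inductive TV3 : Type where
  | F : TV3
  | Z : TV3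
  | T : TV3
deriving DecidableEq

/-- Numeric coding of the three truth values. -/
def TV3.toNat : TV3 → ℕ
  | .F => 0
  | .Z => 1
  | .T => 2

instance : LinearOrder TV3 :=
  LinearOrder.lift' TV3.toNat (fun a b => by
    cases a <;> cases b <;> simp [TV3.toNat])

/-- A three-valued interpretation. -/
def Interp3 (L : Language) : Type := GroundAtom L → TV3

/-- Supremum of a set of three-valued truth values. -/
def sup3 (S : Set TV3) : TV3 :=
  if TV3.T ∈ S then .T else if TV3.Z ∈ S then .Z else .F

/-- Infimum of a set of three-valued truth values. -/
def inf3 (S : Set TV3) : TV3 :=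
  if TV3.F ∈ S then .F else if TV3.Z ∈ S then .Z else .T

/-- Three-valued negation. -/
def neg3 : TV3 → TV3
  | .F => .T
  | .Z => .Z
  | .T => .F

/-- The three-valued semantics of formulas. -/
def Formula.eval3 (K : Interp3 L) : Formula L → (ℕ → HU L) → TV3
  | .verum, _ => .T
  | .falsum, _ => .F
  | .atom p ts, h => K ⟨p, fun i => (ts i).evalT h⟩
  | .neg φ, h => neg3 (φ.eval3 K h)
  | .conj φ ψ, h => min (φ.eval3 K h) (ψ.eval3 K h)
  | .disj φ ψ, h => max (φ.eval3 K h) (ψ.eval3 K h)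
  | .ex v φ, h => sup3 (Set.range fun u : HU L => φ.eval3 K (Function.update h v u))
  | .all v φ, h => inf3 (Set.range fun u : HU L => φ.eval3 K (Function.update h v u))

/-- Collapsing all false values to `F` and all true values to `T`. -/
def collapse : W → TV3 := fun w =>
  match w.1 with
  | .F _ => .F
  | .zero => .Z
  | .T _ => .T

/-- The collapse of an infinite-valued interpretation. -/
def collapseI (I : Interp L) : Interp3 L := fun A => collapse (I A)

/-- `K` is a three-valued model of `P`. -/
def isModel3 (K : Interp3 L) (P : Program L) : Prop :=
  ∀ r ∈ P.rules, ∀ h : ℕ → HU L, r.body.eval3 K h ≤ r.headAtom.eval3 K h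

/-- The three-valued interpretation `M_{P,3}`. -/
def MP3 (P : Program L) : Interp3 L := collapseI (MP P)

/-- The negation degree of a formula. -/
def Formula.negDeg : Formula L → ℕ
  | .verum => 0
  | .falsum => 0
  | .atom _ _ => 0
  | .neg φ => φ.negDeg + 1
  | .conj φ ψ => max φ.negDeg ψ.negDeg
  | .disj φ ψ => max φ.negDeg ψ.negDeg
  | .all _ φ => φ.negDeg
  | .ex _ φ => φ.negDeg

/-!
The iterates `T^β_{P,α}(I)` form a `⊑_α`-chain. At successor stages this is monotonicity of
`T_P`: on single truth values `⊑_α` is preserved by negation, `min`, `max` and arbitrary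
suprema, because it can be expressed by threshold tests `w ≤ x → v ≤ x` and their converses;
infima follow by the duality exchanging `F_a` and `T_a`. At a limit stage the defining clauses produce the `⊑_α`-least upper bound of
the earlier stages.

Along the chain, the level-`α` status of an atom changes at most twice: it may stop being `F_α`
and it may become `T_α`, after which it stays so. As the Herbrand base is countable, all these
changes happen before some countable stage `γ`, and then also `T^{ω₁} ⊑_α T^γ`. Monotonicity
gives `T_P(T^{ω₁}) ⊑_α T_P(T^γ) = T^{γ+1} ⊑_α T^{ω₁}`, so `T^{ω₁}` and `T_P(T^{ω₁})` agree up to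
level `α`. Level `α + 1` follows because `F_{α+1}` is the only value of degree above `α` that a
limit stage assigns.
-/

section LinearOrder

variable {β : Type*} [LinearOrder β] {f t t' v w : β}

theorem eq_or_mem_Ico_Ioc_iff (ht : ∀ x, x < t ↔ x ≤ t') :
    v = w ∨ (v ∈ Set.Ico f t ∧ w ∈ Set.Ioc f t) ↔
      (∀ x, x ≤ f ∨ t ≤ x ∨ x = t' → w ≤ x → v ≤ x) ∧ (∀ x, x < f ∨ t ≤ x → v ≤ x → w ≤ x) := by
  constructor
  · rintro (rfl | ⟨⟨hfv, hvt⟩, hfw, hwt⟩)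
    · exact ⟨fun _ _ => id, fun _ _ => id⟩
    · refine ⟨fun x hx hwx => ?_, fun x hx hvx => ?_⟩
      · rcases hx with hx | hx | rfl
        exacts [by order, by order, (ht v).1 hvt]
      · rcases hx with hx | hx <;> order
  · rintro ⟨hup, hdown⟩
    -- a value outside `[f, t]` is pinned down by the tests at itself and at `t`;
    -- `v = t` and `w = f` are excluded by the tests at `t'` and `f`
    simp only [Set.mem_Ico, Set.mem_Ioc]
    rcases lt_trichotomy v w with h | h | h <;> grind

end LinearOrder

theorem _root_.IsLUB.le_of_forall_exists {β : Type*} [Preorder β] {M N : Set β} {s t x : β}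
    (hs : IsLUB M s) (ht : IsLUB N t) (h : ∀ v ∈ M, ∃ w ∈ N, w ≤ x → v ≤ x) (htx : t ≤ x) :
    s ≤ x :=
  (isLUB_le_iff hs).2 fun v hv =>
    let ⟨_, hw, hwv⟩ := h v hv
    hwv ((ht.1 hw).trans htx)

theorem exists_lt_omega1_forall_of_countable {ι : Type} [Countable ι] (p : ι → Ordinal → Prop)
    (hp : ∀ i, Monotone (p i)) : ∃ γ₀ < omega1, ∀ i, (∃ δ < omega1, p i δ) → p i γ₀ := by
  have : ∀ i, ∃ γ < omega1, (∃ δ < omega1, p i δ) → p i γ := fun i => by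
    by_cases h : ∃ δ < omega1, p i δ
    · obtain ⟨δ, hδ, hpδ⟩ := h
      exact ⟨δ, hδ, fun _ => hpδ⟩
    · exact ⟨0, zero_lt_omega1, fun h' => (h h').elim⟩
  choose g hg using this
  exact ⟨⨆ i, g i, Ordinal.iSup_lt_omega_one fun i => (hg i).1,
    fun i hi => hp i (Ordinal.le_iSup g i) ((hg i).2 hi)⟩

section TruthValues

@[elab_as_elim]
theorem W.ind {motive : W → Prop} (F : ∀ a h, motive (WF a h)) (Z : motive WZ)
    (T : ∀ a h, motive (WT a h)) (v : W) : motive v := by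
  obtain ⟨a | _ | a, h⟩ := v
  exacts [F a h, Z, T a h]

theorem W.ext_iff {v w : W} : v = w ↔ v.1 = w.1 := Subtype.ext_iff

variable {a b : Ordinal} {ha : a < omega1} {hb : b < omega1} {v : W}

@[simp] theorem WF_val : (WF a ha).1 = .F a := rfl
@[simp] theorem WT_val : (WT a ha).1 = .T a := rfl
@[simp] theorem WZ_val : WZ.1 = .zero := rfl
@[simp] theorem WF_inj : WF a ha = WF b hb ↔ a = b := by simp [W.ext_iff]
@[simp] theorem WT_inj : WT a ha = WT b hb ↔ a = b := by simp [W.ext_iff]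
@[simp] theorem WF_lt_WF : WF a ha < WF b hb ↔ a < b := Iff.rfl
@[simp] theorem WT_lt_WT : WT a ha < WT b hb ↔ b < a := Iff.rfl
@[simp] theorem WF_lt_WZ : WF a ha < WZ := trivial
@[simp] theorem WF_lt_WT : WF a ha < WT b hb := trivial
@[simp] theorem WZ_lt_WT : WZ < WT a ha := trivial
@[simp] theorem not_WT_lt_WF : ¬ WT a ha < WF b hb := id
@[simp] theorem not_WT_lt_WZ : ¬ WT a ha < WZ := id
@[simp] theorem WF_le_WF : WF a ha ≤ WF b hb ↔ a ≤ b := by simp [le_iff_lt_or_eq]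
@[simp] theorem WT_le_WT : WT a ha ≤ WT b hb ↔ b ≤ a := by simp [le_iff_lt_or_eq, eq_comm]
@[simp] theorem WF_le_WZ : WF a ha ≤ WZ := WF_lt_WZ.le
@[simp] theorem WF_le_WT : WF a ha ≤ WT b hb := WF_lt_WT.le
@[simp] theorem WZ_le_WT : WZ ≤ WT a ha := WZ_lt_WT.le
@[simp] theorem degLT_WF : degLT (WF a ha) b ↔ a < b := Iff.rfl
@[simp] theorem degLT_WT : degLT (WT a ha) b ↔ a < b := Iff.rfl
@[simp] theorem not_degLT_WZ : ¬ degLT WZ a := id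
@[simp] theorem Wneg_WF : Wneg (WF a ha) = WT (a + 1) (succ_lt_omega1 ha) := rfl
@[simp] theorem Wneg_WT : Wneg (WT a ha) = WF (a + 1) (succ_lt_omega1 ha) := rfl
@[simp] theorem Wneg_WZ : Wneg WZ = WZ := rfl

theorem W.val_eq_F (h : v.1 = .F b) : ∃ hb, v = WF b hb := by
  obtain ⟨a | _ | a, ha⟩ := v <;> simp at h
  exact ⟨h ▸ ha, by subst h; rfl⟩

theorem degLT_iff_exists : degLT v a ↔ ∃ ζ < a, v.1 = .F ζ ∨ v.1 = .T ζ := by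
  induction v using W.ind <;> simp

theorem degLT_iff (ha : a < omega1) : degLT v a ↔ v < WF a ha ∨ WT a ha < v := by
  induction v using W.ind <;> simp

theorem lt_WT_iff (ha : a < omega1) : v < WT a ha ↔ v ≤ WT (a + 1) (succ_lt_omega1 ha) := by
  induction v using W.ind <;> simp [← not_lt, Order.lt_add_one_iff]

theorem degLT_of_Wneg (h : degLT (Wneg v) a ∨ (Wneg v).1 = .F a ∨ (Wneg v).1 = .T a) :
    degLT v a := by
  have hlt : ∀ b : Ordinal, b + 1 < a ∨ b + 1 = a → b < a := fun b h =>
    (Order.lt_add_one_iff.2 le_rfl).trans_le (h.elim le_of_lt le_of_eq)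
  induction v using W.ind with
  | F b hb | T b hb => simpa using hlt b (by simpa using h)
  | Z => simp at h

theorem mem_FIdx {M : Set W} (h : WF a ha ∈ M) : a ∈ FIdx M := ⟨_, h, rfl⟩

theorem mem_TIdx {M : Set W} (h : WT a ha ∈ M) : a ∈ TIdx M := ⟨_, h, rfl⟩

theorem isLUB_Wsup (M : Set W) : IsLUB M (Wsup M) := by
  have hbdd : BddAbove (FIdx M) := ⟨omega1, fun _ hb => (mem_lt_omega1_of_FIdx hb).le⟩
  unfold Wsup
  split_ifs with hT hZ hF
  · obtain ⟨v, hv, hva⟩ := csInf_mem hT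
    refine ⟨fun w hw => ?_, fun u hu => (W.ext_iff.2 hva : v = WT _ _) ▸ hu hv⟩
    induction w using W.ind with
    | F | Z => simp
    | T b hb => simpa using csInf_le' (mem_TIdx hw)
  · refine ⟨fun w hw => ?_, fun u hu => hu hZ⟩
    induction w using W.ind with
    | F | Z => simp
    | T b hb => exact absurd ⟨b, mem_TIdx hw⟩ hT
  · refine ⟨fun w hw => ?_, fun u hu => ?_⟩
    · induction w using W.ind with
      | F b hb => simpa using le_csSup hbdd (mem_FIdx hw)
      | Z => exact absurd hw hZ
      | T b hb => exact absurd ⟨b, mem_TIdx hw⟩ hT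
    · induction u using W.ind with
      | F c hc =>
        simpa using csSup_le' fun b hb => by
          obtain ⟨w, hw, hwb⟩ := hb
          obtain ⟨hb, rfl⟩ := W.val_eq_F hwb
          simpa using hu hw
      | Z | T => simp
  · refine ⟨fun w hw => ?_, fun u hu => ?_⟩
    · induction w using W.ind with
      | F | Z => simp
      | T b hb => exact absurd ⟨b, mem_TIdx hw⟩ hT
    · induction u using W.ind with
      | F c hc =>
        refine absurd (lt_of_le_of_lt (csSup_le' fun b hb => ?_) hc) hF
        obtain ⟨w, hw, hwb⟩ := hb
        obtain ⟨hb, rfl⟩ := W.val_eq_F hwb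
        simpa using hu hw
      | Z | T => simp

end TruthValues

def W.dual : W → W
  | ⟨.F a, h⟩ => ⟨.T a, h⟩
  | ⟨.zero, h⟩ => ⟨.zero, h⟩
  | ⟨.T a, h⟩ => ⟨.F a, h⟩

section Dual

variable {v : W} {a : Ordinal}

@[simp] theorem dual_WF {h : a < omega1} : (WF a h).dual = WT a h := rfl
@[simp] theorem dual_WT {h : a < omega1} : (WT a h).dual = WF a h := rfl
@[simp] theorem dual_WZ : WZ.dual = WZ := rfl

@[simp] theorem degLT_dual : degLT v.dual a ↔ degLT v a := by
  induction v using W.ind <;> rfl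

@[simp] theorem dual_val_F : v.dual.1 = .F a ↔ v.1 = .T a := by
  induction v using W.ind <;> simp

@[simp] theorem dual_val_T : v.dual.1 = .T a ↔ v.1 = .F a := by
  induction v using W.ind <;> simp

@[simp] theorem dual_eq_WZ : v.dual = WZ ↔ v = WZ := by
  induction v using W.ind <;> simp [W.ext_iff]

theorem Winf_eq_dual_Wsup (M : Set W) : Winf M = (Wsup (W.dual '' M)).dual := by
  have hT : TIdx (W.dual '' M) = FIdx M := by ext; simp [TIdx, FIdx]
  have hF : FIdx (W.dual '' M) = TIdx M := by ext; simp [TIdx, FIdx]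
  have hZ : WZ ∈ W.dual '' M ↔ WZ ∈ M := by simp
  simp only [Winf, Wsup, hT, hF, hZ]
  split_ifs <;> rfl

end Dual

/-- `v ⊑_α w` for single truth values. -/
structure WSqa (α : Ordinal) (v w : W) : Prop where
  eq_of_degLT : degLT v α ∨ degLT w α → v = w
  F_left : w.1 = .F α → v.1 = .F α
  T_right : v.1 = .T α → w.1 = .T α

namespace WSqa

variable {α : Ordinal} {u v w v₁ v₂ w₁ w₂ : W} {M N : Set W}

@[refl] theorem refl (v : W) : WSqa α v v := ⟨fun _ => rfl, id, id⟩

theorem trans (h₁ : WSqa α u v) (h₂ : WSqa α v w) : WSqa α u w where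
  eq_of_degLT h := by
    rcases h with h | h
    · have huv := h₁.eq_of_degLT (.inl h)
      exact huv.trans (h₂.eq_of_degLT (.inl (huv ▸ h)))
    · have hvw := h₂.eq_of_degLT (.inr h)
      exact (h₁.eq_of_degLT (.inr (hvw ▸ h))).trans hvw
  F_left := h₁.F_left ∘ h₂.F_left
  T_right := h₂.T_right ∘ h₁.T_right

theorem val_eq_iff (h : WSqa α v w) {ζ : Ordinal} (hζ : ζ < α) {x : TVPre}
    (hx : x = .F ζ ∨ x = .T ζ) : v.1 = x ↔ w.1 = x := by
  constructor <;> intro hv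
  · rwa [← h.eq_of_degLT (.inl (degLT_iff_exists.2 ⟨ζ, hζ, hv ▸ hx⟩))]
  · rwa [h.eq_of_degLT (.inr (degLT_iff_exists.2 ⟨ζ, hζ, hv ▸ hx⟩))]

theorem iff_eq_or_mem (hα : α < omega1) : WSqa α v w ↔
    v = w ∨ (v ∈ Set.Ico (WF α hα) (WT α hα) ∧ w ∈ Set.Ioc (WF α hα) (WT α hα)) := by
  have hF : ∀ {u : W}, u.1 = .F α ↔ u = WF α hα := by simp [W.ext_iff]
  have hT : ∀ {u : W}, u.1 = .T α ↔ u = WT α hα := by simp [W.ext_iff]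
  constructor
  · rintro ⟨heq, hwF, hvT⟩
    by_cases hvw : v = w
    · exact .inl hvw
    · simp only [degLT_iff hα, hF, hT] at heq hwF hvT
      simp only [Set.mem_Ico, Set.mem_Ioc]
      grind
  · rintro (rfl | ⟨⟨hFv, hvT⟩, hFw, hwT⟩)
    · rfl
    · refine ⟨fun h => ?_, fun h => ?_, fun h => ?_⟩
      · rw [degLT_iff hα, degLT_iff hα] at h
        rcases h with (h | h) | (h | h) <;> order
      · rw [hF] at h; order
      · rw [hT] at h; order

/-- Threshold tests such as `w ≤ x → v ≤ x` are preserved by `max`, `min` and suprema. -/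
theorem iff_tests (hα : α < omega1) : WSqa α v w ↔
    (∀ x, x ≤ WF α hα ∨ WT α hα ≤ x ∨ x = WT (α + 1) (succ_lt_omega1 hα) → w ≤ x → v ≤ x) ∧
      (∀ x, x < WF α hα ∨ WT α hα ≤ x → v ≤ x → w ≤ x) :=
  (iff_eq_or_mem hα).trans (eq_or_mem_Ico_Ioc_iff fun _ => lt_WT_iff hα)

theorem max (hα : α < omega1) (h₁ : WSqa α v₁ w₁) (h₂ : WSqa α v₂ w₂) :
    WSqa α (max v₁ v₂) (max w₁ w₂) := by
  rw [iff_tests hα] at *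
  simp only [max_le_iff]
  grind

theorem min (hα : α < omega1) (h₁ : WSqa α v₁ w₁) (h₂ : WSqa α v₂ w₂) :
    WSqa α (min v₁ v₂) (min w₁ w₂) := by
  rw [iff_tests hα] at *
  simp only [min_le_iff]
  grind

theorem Wsup (hα : α < omega1) (hMN : ∀ v ∈ M, ∃ w ∈ N, WSqa α v w)
    (hNM : ∀ w ∈ N, ∃ v ∈ M, WSqa α v w) : WSqa α (Wsup M) (Wsup N) := by
  have hM := isLUB_Wsup M
  have hN := isLUB_Wsup N
  refine (iff_tests hα).2 ⟨fun x hx h => hM.le_of_forall_exists hN (fun v hv => ?_) h,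
    fun x hx h => hN.le_of_forall_exists hM (fun w hw => ?_) h⟩
  · obtain ⟨w, hw, hvw⟩ := hMN v hv
    exact ⟨w, hw, ((iff_tests hα).1 hvw).1 x hx⟩
  · obtain ⟨v, hv, hvw⟩ := hNM w hw
    exact ⟨v, hv, ((iff_tests hα).1 hvw).2 x hx⟩

theorem dual (h : WSqa α v w) : WSqa α w.dual v.dual where
  eq_of_degLT h' := by rw [h.eq_of_degLT (by simpa [or_comm] using h')]
  F_left := by simpa using h.T_right
  T_right := by simpa using h.F_left

theorem Winf (hα : α < omega1) (hMN : ∀ v ∈ M, ∃ w ∈ N, WSqa α v w)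
    (hNM : ∀ w ∈ N, ∃ v ∈ M, WSqa α v w) : WSqa α (Winf M) (Winf N) := by
  rw [Winf_eq_dual_Wsup, Winf_eq_dual_Wsup]
  refine (WSqa.Wsup hα ?_ ?_).dual
  · rintro _ ⟨w, hw, rfl⟩
    obtain ⟨v, hv, hvw⟩ := hNM w hw
    exact ⟨_, Set.mem_image_of_mem _ hv, hvw.dual⟩
  · rintro _ ⟨v, hv, rfl⟩
    obtain ⟨w, hw, hvw⟩ := hMN v hv
    exact ⟨_, Set.mem_image_of_mem _ hw, hvw.dual⟩

theorem Wneg (h : WSqa α v w) : WSqa α (Wneg v) (Wneg w) where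
  eq_of_degLT h' :=
    congrArg _ (h.eq_of_degLT (h'.imp (degLT_of_Wneg ∘ .inl) (degLT_of_Wneg ∘ .inl)))
  F_left h' := by rwa [h.eq_of_degLT (.inr (degLT_of_Wneg (.inr (.inl h'))))]
  T_right h' := by rwa [← h.eq_of_degLT (.inl (degLT_of_Wneg (.inr (.inr h'))))]

end WSqa

section Interpretations

variable {L : Language} {α : Ordinal} {I J K : Interp L}

theorem sqa_iff_forall_wsqa : sqa α I J ↔ ∀ A, WSqa α (I A) (J A) := by
  constructor
  · rintro ⟨hlow, hF, hT⟩ A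
    refine ⟨fun h => ?_, @hF A, @hT A⟩
    have hval : ∀ ζ < α, ((I A).1 = .F ζ ↔ (J A).1 = .F ζ) ∧ ((I A).1 = .T ζ ↔ (J A).1 = .T ζ) :=
      fun ζ hζ => ⟨Set.ext_iff.1 (hlow ζ hζ ζ le_rfl).1 A, Set.ext_iff.1 (hlow ζ hζ ζ le_rfl).2 A⟩
    rw [W.ext_iff]
    rcases h with h | h <;> obtain ⟨ζ, hζ, h | h⟩ := degLT_iff_exists.1 h <;> grind
  · intro h
    refine ⟨fun β hβ ζ hζ => ⟨Set.ext fun A => ?_, Set.ext fun A => ?_⟩,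
      fun A => (h A).F_left, fun A => (h A).T_right⟩
    exacts [(h A).val_eq_iff (hζ.trans_lt hβ) (.inl rfl),
      (h A).val_eq_iff (hζ.trans_lt hβ) (.inr rfl)]

theorem sqa_refl (I : Interp L) : sqa α I I := sqa_iff_forall_wsqa.2 fun _ => .refl _

theorem sqa_trans (hIJ : sqa α I J) (hJK : sqa α J K) : sqa α I K :=
  sqa_iff_forall_wsqa.2 fun A => (sqa_iff_forall_wsqa.1 hIJ A).trans (sqa_iff_forall_wsqa.1 hJK A)

theorem sqa_succ_of_sqa_of_sqa (hIJ : sqa α I J) (hJI : sqa α J I)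
    (hI : ∀ A, degLT (I A) α ∨ (I A).1 = .T α ∨ (I A).1 = .F α ∨ (I A).1 = .F (α + 1)) :
    sqa (α + 1) I J := by
  have heqa : eqa α I J := fun β hβ => by
    rcases hβ.lt_or_eq with hβ | rfl
    · exact hIJ.1 β hβ β le_rfl
    · exact ⟨hJI.2.1.antisymm hIJ.2.1, hIJ.2.2.antisymm hJI.2.2⟩
  have hne : α + 1 ≠ α := (Order.lt_add_one_iff.2 le_rfl).ne'
  refine ⟨fun β hβ ζ hζ => heqa ζ (hζ.trans (Order.lt_add_one_iff.1 hβ)), fun A hA => ?_,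
    fun A hA => ?_⟩
  · have h₁ := sqa_iff_forall_wsqa.1 hIJ A
    have h₂ := sqa_iff_forall_wsqa.1 hJI A
    change (J A).1 = .F (α + 1) at hA
    change (I A).1 = .F (α + 1)
    rcases hI A with hd | hT | hF | hF₁
    · rwa [h₁.eq_of_degLT (.inl hd)]
    · simpa [hA] using h₁.T_right hT
    · simpa [hA, hne] using h₂.F_left hF
    · exact hF₁
  · change (I A).1 = .T (α + 1) at hA
    rcases hI A with hd | h | h | h <;> simp_all [degLT_iff_exists]

theorem WSqa.eval (hα : α < omega1) (h : ∀ A, WSqa α (I A) (J A)) (φ : Formula L)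
    (g : ℕ → HU L) : WSqa α (φ.eval I g) (φ.eval J g) := by
  induction φ generalizing g with
  | verum | falsum => rfl
  | atom p ts => exact h _
  | neg φ ih => exact (ih g).Wneg
  | conj φ ψ ihφ ihψ => exact (ihφ g).min hα (ihψ g)
  | disj φ ψ ihφ ihψ => exact (ihφ g).max hα (ihψ g)
  | ex v φ ih =>
    refine WSqa.Wsup hα ?_ ?_ <;> rintro _ ⟨u, rfl⟩ <;> exact ⟨_, ⟨u, rfl⟩, ih _⟩
  | all v φ ih =>
    refine WSqa.Winf hα ?_ ?_ <;> rintro _ ⟨u, rfl⟩ <;> exact ⟨_, ⟨u, rfl⟩, ih _⟩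

theorem TP_mono (hα : α < omega1) (P : Program L) (h : sqa α I J) :
    sqa α (TP P I) (TP P J) := by
  rw [sqa_iff_forall_wsqa] at h ⊢
  intro A
  refine WSqa.Wsup hα ?_ ?_ <;> rintro _ ⟨φ, hφ, rfl⟩ <;>
    exact ⟨_, ⟨φ, hφ, rfl⟩, WSqa.eval hα h φ _⟩

end Interpretations

section Countable

variable {L : Language}

def Term.code : Term L → ℕ
  | .var n => Nat.pair 0 n
  | .const c => Nat.pair 1 c
  | .func f ts => Nat.pair 2 (Nat.pair f (Encodable.encode (List.ofFn fun i => (ts i).code)))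

theorem Term.code_injective : Function.Injective (Term.code (L := L)) := by
  intro s
  induction s with
  | var | const => intro t h; cases t <;> simp_all [Term.code, Fin.ext_iff]
  | func f ts ih =>
    intro t h
    cases t with
    | func g us =>
      simp only [Term.code, Nat.pair_eq_pair, true_and] at h
      obtain rfl := Fin.ext h.1
      have := List.ofFn_injective (Encodable.encode_injective h.2)
      exact congrArg _ (funext fun i => ih i (congrFun this i))
    | _ => simp [Term.code] at h

instance : Countable (Term L) := Term.code_injective.countable

instance : Countable (HU L) := Subtype.countable

instance : Countable (GroundAtom L) := by
  refine Function.Injective.countable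
    (f := fun A : GroundAtom L => (⟨A.pred, A.args⟩ : Σ p, Fin (L.predAr p) → HU L)) ?_
  rintro ⟨_, _⟩ ⟨_, _⟩ h
  cases h
  rfl

end Countable

section Iterates

variable {L : Language} (P : Program L) {α : Ordinal} (hα : α < omega1) (I : Interp L)

def limitValue (v₀ : W) (β : Ordinal) (f : Ordinal → W) : W :=
  if degLT v₀ α then v₀
  else if ∃ γ, ∃ _ : γ < β, (f γ).1 = .T α then WT α hα
  else if ∀ γ, ∀ _ : γ < β, (f γ).1 = .F α then WF α hα
  else WF (α + 1) (succ_lt_omega1 hα)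

theorem iter_zero : iter P α hα I 0 = I := Ordinal.limitRecOn_zero ..

theorem iter_succ (β : Ordinal) : iter P α hα I (β + 1) = TP P (iter P α hα I β) :=
  Ordinal.limitRecOn_add_one ..

theorem iter_limit {β : Ordinal} (hβ : Order.IsSuccLimit β) (A : GroundAtom L) :
    iter P α hα I β A = limitValue hα (I A) β fun γ => iter P α hα I γ A :=
  congrFun (Ordinal.limitRecOn_limit (motive := fun _ => Interp L) _ _ _ _ hβ) A

section LimitValue

variable {hα} {v₀ w : W} {β : Ordinal} {f : Ordinal → W}

theorem limitValue_cases : degLT (limitValue hα v₀ β f) α ∨ (limitValue hα v₀ β f).1 = .T α ∨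
    (limitValue hα v₀ β f).1 = .F α ∨ (limitValue hα v₀ β f).1 = .F (α + 1) := by
  unfold limitValue
  split_ifs with hd <;> simp [hd]

theorem wsqa_limitValue (hf : ∀ γ < β, WSqa α v₀ (f γ)) {γ : Ordinal} (hγ : γ < β) :
    WSqa α (f γ) (limitValue hα v₀ β f) := by
  have hnd : ¬ degLT v₀ α → ¬ degLT (f γ) α := fun hd h =>
    hd (by rwa [(hf γ hγ).eq_of_degLT (.inr h)])
  unfold limitValue
  split_ifs with hd hT hF
  · rw [(hf γ hγ).eq_of_degLT (.inl hd)]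
  · exact ⟨fun h => (h.elim (hnd hd) (by simp)).elim, by simp, fun _ => rfl⟩
  · rw [(W.ext_iff.2 (hF γ hγ) : f γ = WF α hα)]
  · exact ⟨fun h => (h.elim (hnd hd) (by simp)).elim, by simp, fun h => (hT ⟨γ, hγ, h⟩).elim⟩

theorem limitValue_wsqa (h₀ : WSqa α v₀ w) (hT : (∃ γ < β, (f γ).1 = .T α) → w.1 = .T α)
    (hF : w.1 = .F α → ∀ γ < β, (f γ).1 = .F α) : WSqa α (limitValue hα v₀ β f) w := by
  have hnd : ¬ degLT v₀ α → ¬ degLT w α := fun hd h =>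
    hd (by rwa [h₀.eq_of_degLT (.inr h)])
  unfold limitValue
  split_ifs with hd hT' hF'
  · exact h₀
  · obtain ⟨γ, hγ, h⟩ := hT'
    rw [(W.ext_iff.2 (hT ⟨γ, hγ, h⟩) : w = WT α hα)]
  · exact ⟨fun h => (h.elim (by simp) (hnd hd)).elim, fun _ => rfl, by simp⟩
  · exact ⟨fun h => (h.elim (by simp) (hnd hd)).elim, fun h => (hF' (hF h)).elim, by simp⟩

theorem limitValue_wsqa_of_forall (hβ : 0 < β) (hf₀ : f 0 = v₀) (hw : ∀ γ < β, WSqa α (f γ) w) :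
    WSqa α (limitValue hα v₀ β f) w :=
  limitValue_wsqa (hf₀ ▸ hw 0 hβ) (fun ⟨γ, hγ, h⟩ => (hw γ hγ).T_right h)
    (fun h γ hγ => (hw γ hγ).F_left h)

end LimitValue

theorem iter_sqa_chain (hI : sqa α I (TP P I)) (δ : Ordinal) :
    sqa α (iter P α hα I δ) (iter P α hα I (δ + 1)) ∧
      ∀ γ ≤ δ, sqa α (iter P α hα I γ) (iter P α hα I δ) := by
  induction δ using Ordinal.limitRecOn with
  | zero =>
    refine ⟨by rwa [iter_succ, iter_zero], fun γ hγ => ?_⟩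
    rw [nonpos_iff_eq_zero.1 hγ]
    exact sqa_refl _
  | add_one δ ih =>
    refine ⟨by simpa only [iter_succ] using TP_mono hα P ih.1, fun γ hγ => ?_⟩
    rcases hγ.lt_or_eq with hγ | rfl
    · exact sqa_trans (ih.2 γ (Order.lt_add_one_iff.1 hγ)) ih.1
    · exact sqa_refl _
  | limit δ hδ ih =>
    have hup : ∀ γ < δ, sqa α (iter P α hα I γ) (iter P α hα I δ) := fun γ hγ =>
      sqa_iff_forall_wsqa.2 fun A => by
        rw [iter_limit P hα I hδ A]
        refine wsqa_limitValue (f := fun γ => iter P α hα I γ A) (fun γ' hγ' => ?_) hγ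
        simpa [iter_zero] using sqa_iff_forall_wsqa.1 ((ih γ' hγ').2 0 bot_le) A
    refine ⟨sqa_iff_forall_wsqa.2 fun A => ?_,
      fun γ hγ => hγ.lt_or_eq.elim (hup γ) fun h => h ▸ sqa_refl _⟩
    rw [iter_succ, iter_limit P hα I hδ A]
    refine limitValue_wsqa_of_forall hδ.pos (by rw [iter_zero]) fun γ hγ => ?_
    refine sqa_iff_forall_wsqa.1 (sqa_trans (ih γ hγ).1 ?_) A
    rw [iter_succ]
    exact TP_mono hα P (hup γ hγ)

theorem exists_lt_omega1_sqa_iter_omega1 (hI : sqa α I (TP P I)) :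
    ∃ γ < omega1, sqa α (iter P α hα I omega1) (iter P α hα I γ) := by
  have chain {γ δ} (h : γ ≤ δ) A :=
    sqa_iff_forall_wsqa.1 ((iter_sqa_chain P hα I hI δ).2 γ h) A
  obtain ⟨γ₀, hγ₀, hstab⟩ := exists_lt_omega1_forall_of_countable
    (Sum.elim (fun A γ => (iter P α hα I γ A).1 = .T α) (fun A γ => (iter P α hα I γ A).1 ≠ .F α))
    (by rintro (A | A) γ δ h; exacts [(chain h A).T_right, mt (chain h A).F_left])
  refine ⟨γ₀, hγ₀, sqa_iff_forall_wsqa.2 fun A => ?_⟩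
  rw [iter_limit P hα I omega1_isLimit A]
  refine limitValue_wsqa (by simpa [iter_zero] using chain bot_le A) (hstab (.inl A))
    fun h γ hγ => ?_
  by_contra hne
  exact hstab (.inr A) ⟨γ, hγ, hne⟩ h

end Iterates

/-- the `ω₁`-th iterate is a prefixed point at level `α + 1`. -/
theorem iter_omega1_sqa_succ {L : Language} (P : Program L) (α : Ordinal)
    (hα : α < omega1) (I : Interp L) (hI : sqa α I (TP P I)) :
    sqa (α + 1) (iter P α hα I omega1) (TP P (iter P α hα I omega1)) := by
  have hchain := iter_sqa_chain P hα I hI omega1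
  obtain ⟨γ, hγ, hback⟩ := exists_lt_omega1_sqa_iter_omega1 P hα I hI
  have hforth : sqa α (iter P α hα I (omega1 + 1)) (iter P α hα I (γ + 1)) := by
    simpa only [iter_succ] using TP_mono hα P hback
  rw [← iter_succ]
  refine sqa_succ_of_sqa_of_sqa hchain.1
    (sqa_trans hforth (hchain.2 _ (succ_lt_omega1 hγ).le)) fun A => ?_
  rw [iter_limit P hα I omega1_isLimit A]
  exact limitValue_cases

end ILP
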